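/- Let G be a finite connected graph, and A, B linked, disjoint, saturated subsets of V(G). Then MFS(A, B) = { {u, v} ⊆ V(G) \ (A ∪ B) : cl({u,v}) ∩ N(A ∪ B) is not a clique }. In particular, every minimal forbidden set has size 2. -/

import Mathlib

open Classical

variable {V : Type*}

namespace Paper

def mInterval (G : SimpleGraph V) (u v : V) : Set V :=
  {w | ∃ p : G.Walk u v, p.IsPath ∧ p.toSubgraph.IsInduced ∧ w ∈ p.support}

def MConvex (G : SimpleGraph V) (C : Set V) : Prop :=
  ∀ u ∈ C, ∀ v ∈ C, mInterval G u v ⊆ C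

def mHull (G : SimpleGraph V) (X : Set V) : Set V :=
  ⋂₀ {C | MConvex G C ∧ X ⊆ C}

def mIntervalSet (G : SimpleGraph V) (Z : Set V) : Set V :=
  ⋃ u ∈ Z, ⋃ v ∈ Z, mInterval G u v

def Sep (G : SimpleGraph V) (A B : Set V) : Prop :=
  ∃ H : Set V, MConvex G H ∧ MConvex G Hᶜ ∧ A ⊆ H ∧ B ⊆ Hᶜ

def nbhd (G : SimpleGraph V) (X : Set V) : Set V :=
  {v | v ∉ X ∧ ∃ x ∈ X, G.Adj x v}

def cnbhd (G : SimpleGraph V) (X : Set V) : Set V := X ∪ nbhd G X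

def front (G : SimpleGraph V) (X Y : Set V) : Set V := X ∩ cnbhd G Y

def IsClique (G : SimpleGraph V) (K : Set V) : Prop :=
  ∀ u ∈ K, ∀ v ∈ K, u ≠ v → G.Adj u v

def shadow (G : SimpleGraph V) (A B : Set V) : Set V :=
  {v | (mHull G (B ∪ {v}) ∩ A).Nonempty}

def Forbidden (G : SimpleGraph V) (A B X : Set V) : Prop :=
  X ⊆ (A ∪ B)ᶜ ∧ (mHull G X ∩ A).Nonempty ∧ (mHull G X ∩ B).Nonempty

def MFS (G : SimpleGraph V) (A B : Set V) : Set (Set V) :=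
  {X | Forbidden G A B X ∧ ∀ Y, Y ⊂ X → ¬ Forbidden G A B Y}

def presat (G : SimpleGraph V) (A B : Set V) : Set V :=
  mHull G (shadow G A B ∪ ⋃ X ∈ MFS G A B, ⋂ x ∈ X, mHull G (A ∪ {x}))

def Linked (G : SimpleGraph V) (A B : Set V) : Prop :=
  ∃ a ∈ A, ∃ b ∈ B, G.Adj a b

def Saturated (G : SimpleGraph V) (A B : Set V) : Prop :=
  A = presat G A B ∧ B = presat G B A

def IsCompOf (G : SimpleGraph V) (W S : Set V) : Prop :=
  S.Nonempty ∧ S ⊆ W ∧ (G.induce S).Connected ∧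
    ∀ T, S ⊆ T → T ⊆ W → (G.induce T).Connected → T = S

def Eqv (G : SimpleGraph V) (A B : Set V) (u v : V) : Prop :=
  u = v ∨ ∃ L : List (Set V), L ≠ [] ∧
    (∀ S ∈ L, IsCompOf G (cnbhd G (A ∪ B))ᶜ S) ∧
    List.Chain' (fun S T => (nbhd G S ∩ nbhd G T).Nonempty) L ∧
    (∃ S₀ ∈ L.head?, u ∈ cnbhd G S₀) ∧
    (∃ Sₖ ∈ L.getLast?, v ∈ cnbhd G Sₖ)

end Paper

open Paper

/-!
Saturation forces every vertex of `N(A ∪ B)` to be adjacent to both ends `a ∈ A`, `b ∈ B` of a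
linking edge, so two nonadjacent vertices of `N(A ∪ B)` have `a` and `b` in their monophonic
interval. Hence a pair `{u, v}` outside `A ∪ B` whose hull meets `N(A ∪ B)` in a non-clique is
forbidden, and it is minimal because sets with at most one vertex are convex.

Conversely, call `m ∈ N(A ∪ B)` an attachment of `x` if `x` reaches `m` through vertices at
distance at least two from `A ∪ B`. The attachments of a single vertex `x ∉ A` are pairwise
adjacent, since otherwise `a` lies in the hull of `B ∪ {x}` and `x` is in the shadow of `A`.
Nonadjacent attachments `m`, `m'` of `x`, `y` lie on the induced path `x ⋯ m a m' ⋯ y`. So if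
no pair of a set `X` has the property above, the attachments of all of `X` form a clique `K`, and
the vertices cut off from `a` by `K` form an m-convex set that contains `X` and misses `A ∪ B`:
`X` is not forbidden.
-/

namespace SimpleGraph.Walk

variable {G : SimpleGraph V} {u v w x : V}

lemma isChordless_nil : (nil : G.Walk u u).IsChordless := by
  simp [isChordless_iff_forall_mem_edges]

lemma IsChordless.reverse {p : G.Walk u v} (hp : p.IsChordless) : p.reverse.IsChordless := by
  rw [isChordless_iff_forall_mem_edges] at hp ⊢
  intro x y hx hy hxy
  simp only [support_reverse, List.mem_reverse, edges_reverse] at hx hy ⊢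
  exact hp hx hy hxy

lemma IsChordless.of_cons {h : G.Adj u v} {p : G.Walk v w} (hp : (cons h p).IsPath)
    (hc : (cons h p).IsChordless) : p.IsChordless := by
  rw [isChordless_iff_forall_mem_edges] at hc ⊢
  intro x y hx hy hxy
  have hu : u ∉ p.support := ((cons_isPath_iff h p).1 hp).2
  have := hc (List.mem_cons_of_mem u hx) (List.mem_cons_of_mem u hy) hxy
  rw [edges_cons, List.mem_cons, Sym2.eq_iff] at this
  grind

lemma isPath_isChordless_append {p : G.Walk u v} {q : G.Walk v w}
    (hp : p.IsPath) (hpc : p.IsChordless) (hq : q.IsPath) (hqc : q.IsChordless)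
    (htouch : ∀ x ∈ p.support, ∀ y ∈ q.support, (x = y ∨ G.Adj x y) → x = v ∨ y = v) :
    (p.append q).IsPath ∧ (p.append q).IsChordless := by
  constructor
  · rw [isPath_def, support_append]
    have hq' := hq.support_nodup
    rw [← cons_tail_support] at hq'
    refine hp.support_nodup.append (List.nodup_cons.1 hq').2 fun x hx hx' => ?_
    have hxq : x ∈ q.support := List.mem_of_mem_tail hx'
    rcases htouch x hx x hxq (Or.inl rfl) with rfl | rfl <;>
      exact (List.nodup_cons.1 hq').1 hx'
  · rw [isChordless_iff_forall_mem_edges] at hpc hqc ⊢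
    intro x y hx hy hxy
    rw [mem_support_append_iff] at hx hy
    rw [edges_append, List.mem_append]
    rcases hx with hx | hx <;> rcases hy with hy | hy
    · exact .inl (hpc hx hy hxy)
    · rcases htouch x hx y hy (.inr hxy) with rfl | rfl
      · exact .inr (hqc q.start_mem_support hy hxy)
      · exact .inl (hpc hx p.end_mem_support hxy)
    · rcases htouch y hy x hx (.inr hxy.symm) with rfl | rfl
      · exact .inr (hqc hx q.start_mem_support hxy)
      · exact .inl (hpc p.end_mem_support hy hxy)
    · exact .inr (hqc hx hy hxy)

lemma isPath_isChordless_concat {p : G.Walk u v} (hp : p.IsPath) (hpc : p.IsChordless)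
    (h : G.Adj v w) (hw : ∀ x ∈ p.support, (x = w ∨ G.Adj x w) → x = v) :
    (p.concat h).IsPath ∧ (p.concat h).IsChordless := by
  refine isPath_isChordless_append hp hpc h.isPath_toWalk h.isChordless_toWalk ?_
  intro x hx y hy hxy
  rw [Adj.support_toWalk, List.mem_cons, List.mem_singleton] at hy
  rcases hy with rfl | rfl
  · exact .inr rfl
  · exact .inl (hw x hx hxy)

lemma exists_isPath_isChordless_subset_cons (q : G.Walk v w) (hq : q.IsPath)
    (hqc : q.IsChordless) {u : V} (hu : ∃ z ∈ q.support, u = z ∨ G.Adj u z) :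
    ∃ r : G.Walk u w, r.IsPath ∧ r.IsChordless ∧ r.support ⊆ u :: q.support := by
  induction q generalizing u with
  | nil =>
    obtain ⟨z, hz, hu⟩ := hu
    rw [support_nil, List.mem_singleton] at hz
    subst hz
    rcases hu with rfl | h
    · exact ⟨nil, IsPath.nil, isChordless_nil, by simp⟩
    · exact ⟨h.toWalk, h.isPath_toWalk, h.isChordless_toWalk, by simp⟩
  | @cons a b c hab q ih =>
    by_cases htail : ∃ z ∈ q.support, u = z ∨ G.Adj u z
    · obtain ⟨r, hr, hrc, hrs⟩ := ih hq.of_cons (hqc.of_cons hq) htail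
      exact ⟨r, hr, hrc,
        List.Subset.trans hrs (List.cons_subset_cons _ (List.subset_cons_self _ _))⟩
    push Not at htail
    have hua : u = a ∨ G.Adj u a := by
      obtain ⟨z, hz, hu⟩ := hu
      rw [support_cons, List.mem_cons] at hz
      rcases hz with rfl | hz
      exacts [hu, (hu.elim (htail z hz).1 (htail z hz).2).elim]
    rcases hua with rfl | hua
    · exact ⟨_, hq, hqc, List.subset_cons_self _ _⟩
    have htouch : ∀ x ∈ hua.toWalk.support, ∀ y ∈ (cons hab q).support,
        (x = y ∨ G.Adj x y) → x = a ∨ y = a := by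
      intro x hx y hy hxy
      rw [Adj.support_toWalk, List.mem_cons, List.mem_singleton] at hx
      rcases hx with rfl | rfl
      · rw [support_cons, List.mem_cons] at hy
        rcases hy with rfl | hy
        · exact .inr rfl
        · exact (hxy.elim (htail y hy).1 (htail y hy).2).elim
      · exact .inl rfl
    obtain ⟨hr, hrc⟩ :=
      isPath_isChordless_append hua.isPath_toWalk hua.isChordless_toWalk hq hqc htouch
    exact ⟨_, hr, hrc, by simp⟩

lemma exists_isPath_isChordless_subset (p : G.Walk u v) :
    ∃ q : G.Walk u v, q.IsPath ∧ q.IsChordless ∧ q.support ⊆ p.support := by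
  induction p with
  | nil => exact ⟨nil, IsPath.nil, isChordless_nil, by simp⟩
  | @cons a b c hab p ih =>
    obtain ⟨q, hq, hqc, hqs⟩ := ih
    obtain ⟨r, hr, hrc, hrs⟩ :=
      exists_isPath_isChordless_subset_cons q hq hqc ⟨b, q.start_mem_support, .inr hab⟩
    exact ⟨r, hr, hrc, List.Subset.trans hrs (List.cons_subset_cons _ hqs)⟩

lemma IsPath.eq_of_mem_support_append {p : G.Walk u v} {q : G.Walk v w}
    (h : (p.append q).IsPath) (hp : x ∈ p.support) (hq : x ∈ q.support) : x = v := by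
  rw [isPath_def, support_append, List.nodup_append] at h
  rw [← cons_tail_support, List.mem_cons] at hq
  exact hq.resolve_right fun hx => h.2.2 x hp x hx rfl

lemma exists_boundary_nonadj {T : Set V} {p : G.Walk u v} (hp : p.IsPath)
    (hpc : p.IsChordless) (hu : u ∉ T) (hv : v ∉ T) (hw : w ∈ p.support) (hwT : w ∈ T) :
    ∃ k₁ ∉ T, ∃ k₂ ∉ T, (∃ t ∈ T, G.Adj k₁ t) ∧ (∃ t ∈ T, G.Adj k₂ t) ∧
      k₁ ≠ k₂ ∧ ¬ G.Adj k₁ k₂ := by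
  rw [← p.take_spec hw] at hp hpc
  set a := p.takeUntil w hw
  set b := p.dropUntil w hw
  obtain ⟨d₁, hd₁, hd₁u, hd₁T⟩ := a.exists_boundary_dart Tᶜ hu (by simpa using hwT)
  obtain ⟨d₂, hd₂, hd₂T, hd₂v⟩ := b.exists_boundary_dart T hwT hv
  have hk₁ : d₁.fst ∈ a.support := a.dart_fst_mem_support_of_mem_darts hd₁
  have hk₂ : d₂.snd ∈ b.support := b.dart_snd_mem_support_of_mem_darts hd₂
  have hk₁w : d₁.fst ≠ w := fun h => hd₁u (h ▸ hwT)
  have hk₂w : d₂.snd ≠ w := fun h => hd₂v (h ▸ hwT)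
  refine ⟨d₁.fst, hd₁u, d₂.snd, hd₂v, ⟨_, not_not.1 hd₁T, d₁.adj⟩, ⟨_, hd₂T, d₂.adj.symm⟩,
    fun h => hk₂w (hp.eq_of_mem_support_append (h ▸ hk₁) hk₂), fun hadj => ?_⟩
  have := hpc.mem_edges ((mem_support_append_iff _ _).2 (.inl hk₁))
    ((mem_support_append_iff _ _).2 (.inr hk₂)) hadj
  rw [edges_append, List.mem_append] at this
  rcases this with h | h
  · exact hk₂w (hp.eq_of_mem_support_append (a.snd_mem_support_of_mem_edges h) hk₂)
  · exact hk₁w (hp.eq_of_mem_support_append hk₁ (b.fst_mem_support_of_mem_edges h))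

end SimpleGraph.Walk

namespace Paper

open SimpleGraph

variable {G : SimpleGraph V} {U A B C X Y : Set V} {u v w x y z m m' c a b : V}

lemma mem_mInterval_iff :
    w ∈ mInterval G u v ↔ ∃ p : G.Walk u v, p.IsPath ∧ p.IsChordless ∧ w ∈ p.support := by
  simp [mInterval, Walk.isInduced_toSubgraph]

lemma mem_mInterval_of_adj_of_adj (h₁ : G.Adj u v) (h₂ : G.Adj v w) (hne : u ≠ w)
    (hnadj : ¬ G.Adj u w) : v ∈ mInterval G u w := by
  have hw : ∀ x ∈ h₁.toWalk.support, (x = w ∨ G.Adj x w) → x = v := by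
    intro x hx hxw
    rw [Adj.support_toWalk, List.mem_cons, List.mem_singleton] at hx
    rcases hx with rfl | rfl
    · exact (hxw.elim hne hnadj).elim
    · rfl
  obtain ⟨hpath, hchord⟩ :=
    Walk.isPath_isChordless_concat h₁.isPath_toWalk h₁.isChordless_toWalk h₂ hw
  exact mem_mInterval_iff.2 ⟨_, hpath, hchord, by simp [Walk.concat]⟩

lemma subset_mHull (X : Set V) : X ⊆ mHull G X := fun _ hx _ hC => hC.2 hx

lemma mHull_subset (hC : MConvex G C) (hXC : X ⊆ C) : mHull G X ⊆ C :=
  Set.sInter_subset_of_mem ⟨hC, hXC⟩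

lemma mconvex_mHull (X : Set V) : MConvex G (mHull G X) :=
  fun _ hu _ hv _ hz _ hC => hC.1 _ (hu _ hC) _ (hv _ hC) hz

lemma mInterval_subset_mHull (hu : u ∈ mHull G X) (hv : v ∈ mHull G X) :
    mInterval G u v ⊆ mHull G X :=
  mconvex_mHull X u hu v hv

lemma mInterval_self (u : V) : mInterval G u u = {u} := by
  ext z
  rw [mem_mInterval_iff, Set.mem_singleton_iff]
  constructor
  · rintro ⟨p, hp, -, hz⟩
    rw [Walk.isPath_iff_nil, ← Walk.eq_nil_iff_nil] at hp
    subst hp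
    simpa using hz
  · rintro rfl
    exact ⟨Walk.nil, Walk.IsPath.nil, Walk.isChordless_nil, by simp⟩

lemma mHull_eq_self_of_subsingleton (hX : X.Subsingleton) : mHull G X = X := by
  refine (mHull_subset (fun u hu v hv => ?_) subset_rfl).antisymm (subset_mHull X)
  rw [hX hu hv, mInterval_self, Set.singleton_subset_iff]
  exact hv

lemma MConvex.exists_walk (hG : G.Connected) (hC : MConvex G C) (hu : u ∈ C) (hv : v ∈ C) :
    ∃ p : G.Walk u v, ∀ z ∈ p.support, z ∈ C := by
  obtain ⟨q, hq, hqc, -⟩ := (hG.preconnected u v).some.exists_isPath_isChordless_subset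
  exact ⟨q, fun z hz => hC u hu v hv (mem_mInterval_iff.2 ⟨q, hq, hqc, hz⟩)⟩

lemma mconvex_compl_of_isClique {K : Set V} (hK : IsClique G K) (a : V) :
    MConvex G {v | ∃ p : G.Walk v a, ∀ z ∈ p.support, z ∉ K}ᶜ := by
  set D := {v | ∃ p : G.Walk v a, ∀ z ∈ p.support, z ∉ K}
  have hmemK : ∀ k ∉ D, (∃ t ∈ D, G.Adj k t) → k ∈ K := by
    rintro k hk ⟨t, ⟨p, hp⟩, hkt⟩
    by_contra hkK
    refine hk ⟨Walk.cons hkt p, fun z hz => ?_⟩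
    rw [Walk.support_cons, List.mem_cons] at hz
    rcases hz with rfl | hz
    exacts [hkK, hp z hz]
  intro u hu v hv w hw hwD
  obtain ⟨p, hp, hpc, hwp⟩ := mem_mInterval_iff.1 hw
  obtain ⟨k₁, hk₁, k₂, hk₂, ht₁, ht₂, hne, hnadj⟩ :=
    Walk.exists_boundary_nonadj (T := D) hp hpc hu hv hwp hwD
  exact hnadj (hK k₁ (hmemK k₁ hk₁ ht₁) k₂ (hmemK k₂ hk₂ ht₂) hne)

lemma not_forbidden_of_subsingleton (hY : Y.Subsingleton) : ¬ Forbidden G A B Y := by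
  rintro ⟨hYU, ⟨z, hz, hzA⟩, -⟩
  rw [mHull_eq_self_of_subsingleton hY] at hz
  exact hYU hz (.inl hzA)

lemma subsingleton_of_ssubset_pair (hY : Y ⊂ {u, v}) : Y.Subsingleton := by
  intro y₁ h₁ y₂ h₂
  by_contra hne
  refine hY.2 fun z hz => ?_
  have h₁' := hY.1 h₁
  have h₂' := hY.1 h₂
  simp only [Set.mem_insert_iff, Set.mem_singleton_iff] at h₁' h₂' hz
  rcases hz with rfl | rfl <;> rcases h₁' with rfl | rfl <;> rcases h₂' with rfl | rfl <;>
    first | assumption | exact (hne rfl).elim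

lemma shadow_subset_of_presat (hA : A = presat G A B) : shadow G A B ⊆ A := by
  conv_rhs => rw [hA]
  exact Set.subset_union_left.trans (subset_mHull _)

lemma mconvex_of_presat (hA : A = presat G A B) : MConvex G A :=
  hA ▸ mconvex_mHull _

/-- Otherwise an induced path from `v` to `b` through `A` has its second vertex in `A`, which puts
`v` in the shadow of `A`. -/
lemma adj_of_presat (hG : G.Connected) (hA : A = presat G A B) {a₁ a₂ : V} (hvA : v ∉ A)
    (hb : b ∈ B) (hvb : v ≠ b) (ha₁ : a₁ ∈ A) (ha₂ : a₂ ∈ A) (hva₁ : G.Adj v a₁)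
    (ha₂b : G.Adj a₂ b) : G.Adj v b := by
  by_contra hnadj
  obtain ⟨w, hw⟩ := (mconvex_of_presat hA).exists_walk hG ha₁ ha₂
  obtain ⟨p, hp, hpc, hps⟩ :=
    (Walk.cons hva₁ (w.concat ha₂b)).exists_isPath_isChordless_subset
  cases p with
  | nil => exact hvb rfl
  | @cons _ m _ hvm q =>
    have hmA : m ∈ A := by
      have hm := hps (List.mem_cons_of_mem v q.start_mem_support)
      simp only [Walk.support_cons, Walk.support_concat, List.mem_cons, List.mem_append,
        List.not_mem_nil, or_false] at hm
      rcases hm with rfl | hm | rfl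
      exacts [(G.loopless.irrefl _ hvm).elim, hw m hm, (hnadj hvm).elim]
    have hmI : m ∈ mInterval G v b :=
      mem_mInterval_iff.2 ⟨_, hp, hpc, List.mem_cons_of_mem v q.start_mem_support⟩
    have hmH : m ∈ mHull G (B ∪ {v}) :=
      mInterval_subset_mHull (subset_mHull _ (.inr rfl)) (subset_mHull _ (.inl hb)) hmI
    exact hvA (shadow_subset_of_presat hA ⟨m, hmH, hmA⟩)

def remote (G : SimpleGraph V) (U : Set V) : Set V := (cnbhd G U)ᶜ

/-- For `x ∈ nbhd G U` this is `{x}`; for `x ∈ remote G U` it is the set of neighbours in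
`nbhd G U` of the component of `x` in `remote G U`. -/
def attach (G : SimpleGraph V) (U : Set V) (x : V) : Set V :=
  {m ∈ nbhd G U | ∃ p : G.Walk x m, ∀ z ∈ p.support, z = m ∨ z ∈ remote G U}

lemma notMem_of_mem_remote (hz : z ∈ remote G U) : z ∉ U := fun h => hz (.inl h)

lemma not_adj_of_mem_remote (hz : z ∈ remote G U) (hu : u ∈ U) : ¬ G.Adj u z :=
  fun hadj => hz (.inr ⟨notMem_of_mem_remote hz, u, hu, hadj⟩)

lemma attach_subset_of_eq_or_adj (hx : x ∈ remote G U) (hxy : x = y ∨ G.Adj x y) :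
    attach G U y ⊆ attach G U x := by
  rcases hxy with rfl | hxy
  · exact subset_rfl
  rintro m ⟨hm, p, hp⟩
  refine ⟨hm, Walk.cons hxy p, fun z hz => ?_⟩
  rw [Walk.support_cons, List.mem_cons] at hz
  rcases hz with rfl | hz
  exacts [.inr hx, hp z hz]

lemma mem_attach_of_mem_support {p : G.Walk x m}
    (hp : ∀ z ∈ p.support, z = m ∨ z ∈ remote G U) (hm : m ∈ nbhd G U) (hz : z ∈ p.support) :
    m ∈ attach G U z :=
  ⟨hm, p.dropUntil z hz, fun y hy => hp y (p.support_dropUntil_subset_support hz hy)⟩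

lemma exists_mem_support_mem_attach (hx : x ∉ U) (p : G.Walk x y) (hy : y ∈ U) :
    ∃ n ∈ p.support, n ∈ attach G U x := by
  induction p with
  | nil => exact (hx hy).elim
  | @cons x w y hxw p ih =>
    by_cases hxN : x ∈ nbhd G U
    · exact ⟨x, p.support.mem_cons_self, hxN, Walk.nil, by simp⟩
    have hxR : x ∈ remote G U := fun h => h.elim hx hxN
    obtain ⟨n, hn, hnA⟩ := ih (fun hw => not_adj_of_mem_remote hxR hw hxw.symm) hy
    exact ⟨n, List.mem_cons_of_mem x hn, attach_subset_of_eq_or_adj hxR (.inr hxw) hnA⟩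

lemma exists_isPath_concat_of_mem_attach (hm : m ∈ attach G U x) (hc : c ∈ U)
    (hmc : G.Adj m c) :
    ∃ p : G.Walk x m, (∀ z ∈ p.support, z = m ∨ z ∈ remote G U) ∧
      (p.concat hmc).IsPath ∧ (p.concat hmc).IsChordless := by
  obtain ⟨-, w, hw⟩ := hm
  obtain ⟨p, hp, hpc, hps⟩ := w.exists_isPath_isChordless_subset
  have hpU : ∀ z ∈ p.support, z = m ∨ z ∈ remote G U := fun z hz => hw z (hps hz)
  refine ⟨p, hpU, Walk.isPath_isChordless_concat hp hpc hmc fun z hz hzc => ?_⟩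
  refine (hpU z hz).resolve_right fun hzR => ?_
  rcases hzc with rfl | hzc
  exacts [notMem_of_mem_remote hzR hc, not_adj_of_mem_remote hzR hc hzc.symm]

structure LinkedSaturated (G : SimpleGraph V) (A B : Set V) (a b : V) : Prop where
  connected : G.Connected
  presat_left : A = presat G A B
  presat_right : B = presat G B A
  mem_left : a ∈ A
  mem_right : b ∈ B
  adj : G.Adj a b

namespace LinkedSaturated

lemma symm (h : LinkedSaturated G A B a b) : LinkedSaturated G B A b a :=
  ⟨h.connected, h.presat_right, h.presat_left, h.mem_right, h.mem_left, h.adj.symm⟩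

lemma adj_of_mem_nbhd (h : LinkedSaturated G A B a b) {n : V} (hn : n ∈ nbhd G (A ∪ B)) :
    G.Adj n a ∧ G.Adj n b := by
  have key : ∀ {A B : Set V} {a b : V}, LinkedSaturated G A B a b → n ∉ A ∪ B →
      ∀ g ∈ A, G.Adj g n → G.Adj n a ∧ G.Adj n b := by
    intro A B a b h hn g hg hgn
    have hnA : n ∉ A := fun h' => hn (.inl h')
    have hnB : n ∉ B := fun h' => hn (.inr h')
    have hnb := adj_of_presat h.connected h.presat_left hnA h.mem_right
      (fun e => hnB (e ▸ h.mem_right)) hg h.mem_left hgn.symm h.adj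
    have hna := adj_of_presat h.connected h.presat_right hnB h.mem_left
      (fun e => hnA (e ▸ h.mem_left)) h.mem_right h.mem_right hnb h.adj.symm
    exact ⟨hna, hnb⟩
  obtain ⟨hnU, g, hg | hg, hgn⟩ := hn
  · exact key h hnU g hg hgn
  · exact (key h.symm (by rwa [Set.union_comm]) g hg hgn).symm

lemma mem_mInterval_of_mem_nbhd (h : LinkedSaturated G A B a b) {k₁ k₂ : V}
    (hk₁ : k₁ ∈ nbhd G (A ∪ B)) (hk₂ : k₂ ∈ nbhd G (A ∪ B)) (hne : k₁ ≠ k₂)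
    (hnadj : ¬ G.Adj k₁ k₂) : a ∈ mInterval G k₁ k₂ ∧ b ∈ mInterval G k₁ k₂ := by
  obtain ⟨ha₁, hb₁⟩ := h.adj_of_mem_nbhd hk₁
  obtain ⟨ha₂, hb₂⟩ := h.adj_of_mem_nbhd hk₂
  exact ⟨mem_mInterval_of_adj_of_adj ha₁ ha₂.symm hne hnadj,
    mem_mInterval_of_adj_of_adj hb₁ hb₂.symm hne hnadj⟩

lemma forbidden_of_not_isClique (h : LinkedSaturated G A B a b) (hX : X ⊆ (A ∪ B)ᶜ)
    (hK : ¬ IsClique G (mHull G X ∩ nbhd G (A ∪ B))) : Forbidden G A B X := by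
  simp only [IsClique, not_forall] at hK
  obtain ⟨k₁, ⟨hk₁X, hk₁⟩, k₂, ⟨hk₂X, hk₂⟩, hne, hnadj⟩ := hK
  obtain ⟨haI, hbI⟩ := h.mem_mInterval_of_mem_nbhd hk₁ hk₂ hne hnadj
  exact ⟨hX, ⟨a, mInterval_subset_mHull hk₁X hk₂X haI, h.mem_left⟩,
    ⟨b, mInterval_subset_mHull hk₁X hk₂X hbI, h.mem_right⟩⟩

lemma adj_of_mem_attach (h : LinkedSaturated G A B a b) (hx : x ∉ A)
    (hm : m ∈ attach G (A ∪ B) x) (hm' : m' ∈ attach G (A ∪ B) x) (hne : m ≠ m') :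
    G.Adj m m' := by
  by_contra hnadj
  have hmemH : ∀ n ∈ attach G (A ∪ B) x, n ∈ mHull G (B ∪ {x}) := by
    intro n hn
    obtain ⟨p, -, hp, hpc⟩ :=
      exists_isPath_concat_of_mem_attach hn (.inr h.mem_right) (h.adj_of_mem_nbhd hn.1).2
    refine mInterval_subset_mHull (subset_mHull _ (.inr rfl)) (subset_mHull _ (.inl h.mem_right))
      (mem_mInterval_iff.2 ⟨_, hp, hpc, ?_⟩)
    simp
  have haI := (h.mem_mInterval_of_mem_nbhd hm.1 hm'.1 hne hnadj).1
  have haH := mInterval_subset_mHull (hmemH m hm) (hmemH m' hm') haI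
  exact hx (shadow_subset_of_presat h.presat_left ⟨a, haH, h.mem_left⟩)

lemma mem_mInterval_of_mem_attach (h : LinkedSaturated G A B a b)
    (hm : m ∈ attach G (A ∪ B) x) (hm' : m' ∈ attach G (A ∪ B) y) (hne : m ≠ m')
    (hnadj : ¬ G.Adj m m') : m ∈ mInterval G x y ∧ m' ∈ mInterval G x y := by
  have hmU := hm.1
  have hm'U := hm'.1
  obtain ⟨p, hpU, hp, hpc⟩ :=
    exists_isPath_concat_of_mem_attach hm (.inl h.mem_left) (h.adj_of_mem_nbhd hmU).1
  obtain ⟨q, hqU, hq, hqc⟩ :=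
    exists_isPath_concat_of_mem_attach hm' (.inl h.mem_left) (h.adj_of_mem_nbhd hm'U).1
  have hcross : ∀ z ∈ p.support, ∀ z' ∈ q.support, ¬ (z = z' ∨ G.Adj z z') := by
    intro z hz z' hz' hzz'
    have hmz := mem_attach_of_mem_support hpU hmU hz
    have hm'z' := mem_attach_of_mem_support hqU hm'U hz'
    rcases hpU z hz with rfl | hzR
    · rcases hqU z' hz' with rfl | hz'R
      · exact hzz'.elim hne hnadj
      · exact hnadj (h.adj_of_mem_attach (fun hA => notMem_of_mem_remote hz'R (.inl hA))
          (attach_subset_of_eq_or_adj hz'R (hzz'.imp Eq.symm Adj.symm) hmz) hm'z' hne)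
    · exact hnadj (h.adj_of_mem_attach (fun hA => notMem_of_mem_remote hzR (.inl hA)) hmz
        (attach_subset_of_eq_or_adj hzR hzz' hm'z') hne)
  obtain ⟨hr, hrc⟩ := Walk.isPath_isChordless_append hp hpc hq.reverse hqc.reverse
    fun z hz z' hz' hzz' => by
      simp only [Walk.support_concat, Walk.support_reverse, List.mem_append, List.mem_reverse,
        List.mem_singleton] at hz hz'
      rcases hz with hz | rfl
      · rcases hz' with hz' | rfl
        · exact (hcross z hz z' hz' hzz').elim
        · exact .inr rfl
      · exact .inl rfl
  refine ⟨mem_mInterval_iff.2 ⟨_, hr, hrc, ?_⟩, mem_mInterval_iff.2 ⟨_, hr, hrc, ?_⟩⟩ <;> simp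

lemma disjoint_mHull_of_isClique (h : LinkedSaturated G A B a b) (hX : X ⊆ (A ∪ B)ᶜ)
    (hK : IsClique G {m | ∃ x ∈ X, m ∈ attach G (A ∪ B) x}) :
    Disjoint (mHull G X) (A ∪ B) := by
  set Φ := {m | ∃ x ∈ X, m ∈ attach G (A ∪ B) x}
  set D := {v | ∃ p : G.Walk v a, ∀ z ∈ p.support, z ∉ Φ}
  have hXD : X ⊆ Dᶜ := by
    rintro x hx ⟨p, hp⟩
    obtain ⟨n, hn, hnx⟩ := exists_mem_support_mem_attach (hX hx) p (.inl h.mem_left)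
    exact hp n hn ⟨x, hx, hnx⟩
  have hΦ : ∀ z ∈ A ∪ B, z ∉ Φ := fun z hz ⟨_, _, hzN, _⟩ => hzN.1 hz
  have hUD : A ∪ B ⊆ D := by
    rintro g (hg | hg)
    · obtain ⟨p, hp⟩ :=
        (mconvex_of_presat h.presat_left).exists_walk h.connected hg h.mem_left
      exact ⟨p, fun z hz => hΦ z (.inl (hp z hz))⟩
    · obtain ⟨p, hp⟩ :=
        (mconvex_of_presat h.presat_right).exists_walk h.connected hg h.mem_right
      refine ⟨p.concat h.adj.symm, fun z hz => ?_⟩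
      rw [Walk.support_concat, List.mem_append, List.mem_singleton] at hz
      rcases hz with hz | rfl
      exacts [hΦ z (.inr (hp z hz)), hΦ z (.inl h.mem_left)]
  exact Set.disjoint_left.2 fun z hz hzU =>
    mHull_subset (mconvex_compl_of_isClique hK a) hXD hz (hUD hzU)

lemma exists_not_isClique (h : LinkedSaturated G A B a b) (hX : X ⊆ (A ∪ B)ᶜ)
    (hXA : (mHull G X ∩ A).Nonempty) :
    ∃ x ∈ X, ∃ y ∈ X, ¬ IsClique G (mHull G {x, y} ∩ nbhd G (A ∪ B)) := by
  by_contra! hcl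
  refine (h.disjoint_mHull_of_isClique hX ?_).ne_of_mem hXA.some_mem.1 (.inl hXA.some_mem.2) rfl
  rintro m ⟨x, hx, hm⟩ m' ⟨y, hy, hm'⟩ hne
  by_contra hnadj
  obtain ⟨hmI, hm'I⟩ := h.mem_mInterval_of_mem_attach hm hm' hne hnadj
  have hxH : x ∈ mHull G {x, y} := subset_mHull _ (by simp)
  have hyH : y ∈ mHull G {x, y} := subset_mHull _ (by simp)
  exact hnadj (hcl x hx y hy m ⟨mInterval_subset_mHull hxH hyH hmI, hm.1⟩
    m' ⟨mInterval_subset_mHull hxH hyH hm'I, hm'.1⟩ hne)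

lemma mem_MFS_iff (h : LinkedSaturated G A B a b) :
    X ∈ MFS G A B ↔ ∃ u v : V, X = {u, v} ∧ X ⊆ (A ∪ B)ᶜ ∧
      ¬ IsClique G (mHull G {u, v} ∩ nbhd G (A ∪ B)) := by
  constructor
  · rintro ⟨⟨hX, hXA, -⟩, hmin⟩
    obtain ⟨x, hx, y, hy, hK⟩ := h.exists_not_isClique hX hXA
    have hxy : {x, y} ⊆ X := Set.insert_subset hx (Set.singleton_subset_iff.2 hy)
    have hF := h.forbidden_of_not_isClique (hxy.trans hX) hK
    have hXeq : X = {x, y} := by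
      by_contra hne
      exact hmin _ (Set.ssubset_iff_subset_ne.2 ⟨hxy, Ne.symm hne⟩) hF
    exact ⟨x, y, hXeq, hX, hK⟩
  · rintro ⟨u, v, rfl, hX, hK⟩
    exact ⟨h.forbidden_of_not_isClique hX hK,
      fun Y hY => not_forbidden_of_subsingleton (subsingleton_of_ssubset_pair hY)⟩

lemma ncard_eq_two_of_mem_MFS (h : LinkedSaturated G A B a b) (hX : X ∈ MFS G A B) :
    X.ncard = 2 := by
  obtain ⟨u, v, rfl, -⟩ := h.mem_MFS_iff.1 hX
  refine Set.ncard_pair fun huv => not_forbidden_of_subsingleton ?_ hX.1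
  simp [huv]

end LinkedSaturated

end Paper

theorem stmt_11_general (G : SimpleGraph V) (hG : G.Connected)
    (A B : Set V) (hL : Linked G A B)
    (hS : Saturated G A B) :
    MFS G A B = {X | ∃ u v : V, X = {u, v} ∧ X ⊆ (A ∪ B)ᶜ ∧
        ¬ IsClique G (mHull G {u, v} ∩ nbhd G (A ∪ B))} ∧
    ∀ X ∈ MFS G A B, X.ncard = 2 := by
  obtain ⟨a, ha, b, hb, hab⟩ := hL
  have h : LinkedSaturated G A B a b := ⟨hG, hS.1, hS.2, ha, hb, hab⟩
  exact ⟨Set.ext fun X => h.mem_MFS_iff, fun X => h.ncard_eq_two_of_mem_MFS⟩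

theorem stmt_11 [Fintype V] (G : SimpleGraph V) (hG : G.Connected)
    (A B : Set V) (hL : Linked G A B) (hd : Disjoint A B)
    (hS : Saturated G A B) :
    MFS G A B = {X | ∃ u v : V, X = {u, v} ∧ X ⊆ (A ∪ B)ᶜ ∧
        ¬ IsClique G (mHull G {u, v} ∩ nbhd G (A ∪ B))} ∧
    ∀ X ∈ MFS G A B, X.ncard = 2 :=
  stmt_11_general G hG A B hL hS
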